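/- Let X = Y = [0,1] with Lebesgue measure λ = μ = ν, let α ∈ [0,1) be irrational, Γ₀ = {(x,x) : x ∈ [0,1]}, Γ₁ = {(x, x ⊕ α) : x ∈ [0,1]} where ⊕ is addition mod 1, and let c = a on Γ₀, c = b on Γ₁ (a, b ∈ [0,∞)) and c = ∞ elsewhere. Then Γ₀ and Γ₁ are c-monotone sets, and the transport plans π₀ = (x ↦ (x,x))_#λ and π₁ = (x ↦ (x, x⊕α))_#λ are finite c-monotone transport plans in Π(λ,λ) with I_c[π₀] = a and I_c[π₁] = b; in particular, if a > b then π₀ is c-monotone but not optimal. -/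

import Mathlib

open MeasureTheory Set
open scoped ENNReal

noncomputable section

def IsCoupling {X Y : Type*} [MeasurableSpace X] [MeasurableSpace Y]
    (μ : Measure X) (ν : Measure Y) (π : Measure (X × Y)) : Prop :=
  π.map Prod.fst = μ ∧ π.map Prod.snd = ν

def CMonotoneSet {X Y : Type*} (c : X × Y → ℝ≥0∞) (Γ : Set (X × Y)) : Prop :=
  ∀ (n : ℕ) (f : Fin (n + 1) → X × Y), (∀ i, f i ∈ Γ) →
    ∑ i, c (f i) ≤ ∑ i, c ((f i).1, (f (i + 1)).2)

/-!
Measure the displacement `y - x` in the circle `ℝ/ℤ`: it is `0` on `Γ₀` and `α` on `Γ₁`, and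
along a cycle `(xᵢ, yᵢ)` the total displacement of the pairs `(xᵢ, yᵢ)` equals that of the
reshuffled pairs `(xᵢ, yᵢ₊₁)`. If all reshuffled pairs have finite cost they lie in `Γ₀ ∪ Γ₁`, and
as `α` has infinite order in `ℝ/ℤ` the number of them in `Γ₁` equals the number of original pairs
in `Γ₁`. Hence a cycle in `Γ₀` (resp. `Γ₁`) is reshuffled into `Γ₀` (resp. `Γ₁`) and both cost sums
agree; otherwise the reshuffled sum is `∞`. That `π₁` has second marginal `λ` is the invariance of
Haar measure on `ℝ/ℤ` under rotation by `α`.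
-/

section CMonotone

variable {X Y : Type*}

theorem cMonotoneSet_of_shift_mem {c : X × Y → ℝ≥0∞} {Γ S : Set (X × Y)} {k : ℝ≥0∞}
    (hΓ : ∀ p ∈ Γ, c p = k) (hS : ∀ p ∉ S, c p = ⊤)
    (hshift : ∀ (n : ℕ) (f : Fin (n + 1) → X × Y), (∀ i, f i ∈ Γ) →
      (∀ i, ((f i).1, (f (i + 1)).2) ∈ S) → ∀ i, ((f i).1, (f (i + 1)).2) ∈ Γ) :
    CMonotoneSet c Γ := by
  intro n f hf
  by_cases hfS : ∀ i, ((f i).1, (f (i + 1)).2) ∈ S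
  · have hfΓ := hshift n f hf hfS
    exact (Finset.sum_congr rfl fun i _ => (hΓ _ (hf i)).trans (hΓ _ (hfΓ i)).symm).le
  · obtain ⟨i, hi⟩ := not_forall.1 hfS
    calc ∑ i, c (f i) ≤ c ((f i).1, (f (i + 1)).2) := by rw [hS _ hi]; exact le_top
      _ ≤ ∑ j, c ((f j).1, (f (j + 1)).2) :=
        Finset.single_le_sum (f := fun j => c ((f j).1, (f (j + 1)).2))
          (fun _ _ => zero_le) (Finset.mem_univ i)

variable {G : Type*} [AddCommGroup G] (u : X → G) (v : Y → G)

theorem sum_sub_shift_eq {n : ℕ} (f : Fin (n + 1) → X × Y) :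
    ∑ i, (v (f (i + 1)).2 - u (f i).1) = ∑ i, (v (f i).2 - u (f i).1) := by
  simp only [Finset.sum_sub_distrib]
  congr 1
  exact Fintype.sum_equiv (Equiv.addRight 1) _ _ fun _ => rfl

variable {u v} {θ : G} {Γ₀ Γ₁ : Set (X × Y)}
  (h₀ : ∀ p ∈ Γ₀, v p.2 - u p.1 = 0) (h₁ : ∀ p ∈ Γ₁, v p.2 - u p.1 = θ)
include h₀ h₁

open Classical Finset in
theorem sum_sub_eq_card_nsmul {n : ℕ} {f : Fin (n + 1) → X × Y} (hf : ∀ i, f i ∈ Γ₀ ∪ Γ₁) :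
    ∑ i, (v (f i).2 - u (f i).1) = #{i | f i ∈ Γ₁} • θ := by
  rw [← sum_const, sum_filter]
  refine sum_congr rfl fun i _ => ?_
  split_ifs with hi
  · exact h₁ _ hi
  · exact h₀ _ ((hf i).resolve_right hi)

open Classical Finset in
theorem card_shift_mem_eq (hθ : ¬IsOfFinAddOrder θ) {n : ℕ} {f : Fin (n + 1) → X × Y}
    (hf : ∀ i, f i ∈ Γ₀ ∪ Γ₁) (hshift : ∀ i, ((f i).1, (f (i + 1)).2) ∈ Γ₀ ∪ Γ₁) :
    #{i | ((f i).1, (f (i + 1)).2) ∈ Γ₁} = #{i | f i ∈ Γ₁} := by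
  apply injective_nsmul_iff_not_isOfFinAddOrder.2 hθ
  beta_reduce
  rw [← sum_sub_eq_card_nsmul h₀ h₁ hf, ← sum_sub_eq_card_nsmul h₀ h₁ hshift]
  exact sum_sub_shift_eq u v f

theorem disjoint_of_not_isOfFinAddOrder (hθ : ¬IsOfFinAddOrder θ) : Disjoint Γ₀ Γ₁ :=
  Set.disjoint_left.2 fun p hp₀ hp₁ => hθ <| (h₁ p hp₁).symm.trans (h₀ p hp₀) ▸ .zero

open Classical Finset in
theorem shift_mem_of_forall_mem_left (hθ : ¬IsOfFinAddOrder θ) {n : ℕ}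
    {f : Fin (n + 1) → X × Y} (hf : ∀ i, f i ∈ Γ₀)
    (hshift : ∀ i, ((f i).1, (f (i + 1)).2) ∈ Γ₀ ∪ Γ₁) (i : Fin (n + 1)) :
    ((f i).1, (f (i + 1)).2) ∈ Γ₀ := by
  have hcard := card_shift_mem_eq h₀ h₁ hθ (fun j => .inl (hf j)) hshift
  rw [card_filter_eq_zero_iff.2 fun j _ =>
    Set.disjoint_left.1 (disjoint_of_not_isOfFinAddOrder h₀ h₁ hθ) (hf j)] at hcard
  exact (hshift i).resolve_right (card_filter_eq_zero_iff.1 hcard i (mem_univ i))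

open Classical Finset in
theorem shift_mem_of_forall_mem_right (hθ : ¬IsOfFinAddOrder θ) {n : ℕ}
    {f : Fin (n + 1) → X × Y} (hf : ∀ i, f i ∈ Γ₁)
    (hshift : ∀ i, ((f i).1, (f (i + 1)).2) ∈ Γ₀ ∪ Γ₁) (i : Fin (n + 1)) :
    ((f i).1, (f (i + 1)).2) ∈ Γ₁ := by
  have hcard := card_shift_mem_eq h₀ h₁ hθ (fun j => .inr (hf j)) hshift
  rw [filter_true_of_mem fun j _ => hf j] at hcard
  exact card_filter_eq_iff.1 hcard i (mem_univ i)

end CMonotone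

section Graph

variable {X Y : Type*} [MeasurableSpace X] [MeasurableSpace Y] {μ : Measure X} {T : X → Y}

theorem isCoupling_map_graph {ν : Measure Y} (hT : Measurable T) (hTμ : μ.map T = ν) :
    IsCoupling μ ν (μ.map fun x => (x, T x)) :=
  ⟨by rw [Measure.map_map measurable_fst (measurable_id'.prodMk hT)]; exact Measure.map_id,
    by rw [Measure.map_map measurable_snd (measurable_id'.prodMk hT)]; exact hTμ⟩

variable [MeasurableEq Y] {s : Set X}

theorem measurableSet_graph_image (hT : Measurable T) (hs : MeasurableSet s) :
    MeasurableSet ((fun x => (x, T x)) '' s) := by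
  have : (fun x => (x, T x)) '' s = {p | p.1 ∈ s ∧ p.2 = T p.1} := by
    ext ⟨x, y⟩
    simp [eq_comm]
  rw [this]
  exact (measurable_fst hs).inter (measurableSet_eq_fun measurable_snd (hT.comp measurable_fst))

theorem map_graph_apply_image (hT : Measurable T) (hs : MeasurableSet s) :
    μ.map (fun x => (x, T x)) ((fun x => (x, T x)) '' s) = μ s := by
  rw [Measure.map_apply (measurable_id'.prodMk hT) (measurableSet_graph_image hT hs),
    preimage_image_eq s fun _ _ h => congrArg Prod.fst h]

theorem map_graph_apply_image_compl (hT : Measurable T) (hs : MeasurableSet s) :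
    μ.map (fun x => (x, T x)) ((fun x => (x, T x)) '' s)ᶜ = μ sᶜ := by
  rw [Measure.map_apply (measurable_id'.prodMk hT) (measurableSet_graph_image hT hs).compl,
    preimage_compl, preimage_image_eq s fun _ _ h => congrArg Prod.fst h]

theorem lintegral_map_graph_of_forall_mem_image (hT : Measurable T) (hs : MeasurableSet s)
    (hμs : μ sᶜ = 0) {c : X × Y → ℝ≥0∞} {k : ℝ≥0∞}
    (hc : ∀ p ∈ (fun x => (x, T x)) '' s, c p = k) :
    ∫⁻ p, c p ∂μ.map (fun x => (x, T x)) = k * μ univ := by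
  have hae : ∀ᵐ p ∂μ.map (fun x => (x, T x)), c p = k :=
    measure_mono_null (fun p hp hmem => hp (hc p hmem))
      ((map_graph_apply_image_compl hT hs).trans hμs)
  rw [lintegral_congr_ae hae, lintegral_const,
    Measure.map_apply (measurable_id'.prodMk hT) .univ, preimage_univ]

end Graph

theorem map_fract_add_volume_Icc (α : ℝ) :
    (volume.restrict (Icc (0 : ℝ) 1)).map (fun x => Int.fract (x + α)) =
      volume.restrict (Icc 0 1) := by
  let fr : UnitAddCircle → ℝ := fun z => AddCircle.equivIco 1 0 z
  have hfr : Measurable fr :=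
    measurable_subtype_coe.comp (AddCircle.measurableEquivIco 1 0).measurable
  have hIoc : volume.restrict (Icc (0 : ℝ) 1) = volume.restrict (Ioc 0 (0 + 1)) := by
    rw [zero_add]
    exact Measure.restrict_congr_set Ioc_ae_eq_Icc.symm
  have hmk := UnitAddCircle.measurePreserving_mk 0
  have hrot := (measurePreserving_add_right volume (α : UnitAddCircle)).comp hmk
  have hfract : (volume.restrict (Icc (0 : ℝ) 1)).map Int.fract = volume.restrict (Icc 0 1) := by
    rw [Measure.restrict_congr_set Ico_ae_eq_Icc.symm]
    conv_rhs => rw [← Measure.map_id (μ := volume.restrict (Ico (0 : ℝ) 1))]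
    refine Measure.map_congr ?_
    filter_upwards [ae_restrict_mem measurableSet_Ico] with x hx
    exact Int.fract_eq_self.2 hx
  calc _ = (volume.restrict (Ioc (0 : ℝ) (0 + 1))).map (fr ∘ (· + (α : UnitAddCircle)) ∘ (↑)) := by
        rw [hIoc]
        congr 1
        ext x
        simp only [Function.comp_apply, fr, ← AddCircle.coe_add, AddCircle.coe_equivIco_mk_apply,
          div_one, mul_one]
    _ = volume.map fr := by rw [← Measure.map_map hfr hrot.measurable, hrot.map_eq]
    _ = (volume.restrict (Ioc (0 : ℝ) (0 + 1))).map (fr ∘ (↑)) := by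
        rw [← Measure.map_map hfr hmk.measurable, hmk.map_eq]
    _ = (volume.restrict (Icc (0 : ℝ) 1)).map Int.fract := by
        rw [hIoc]
        congr 1
        ext x
        simp [fr]
    _ = _ := hfract

theorem Irrational.not_isOfFinAddOrder_coe {α : ℝ} (hα : Irrational α) :
    ¬IsOfFinAddOrder (α : UnitAddCircle) :=
  AddCircle.not_isOfFinAddOrder_iff_forall_rat_ne_div.2 fun q hq => hα ⟨q, by simpa using hq⟩

theorem ambrosio_pratelli_example_general
    (α : ℝ) (hα : Irrational α)
    (a b : ℝ≥0∞)
    (c : ℝ × ℝ → ℝ≥0∞)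
    (Γ₀ : Set (ℝ × ℝ)) (hΓ₀ : Γ₀ = (fun x => (x, x)) '' Icc (0 : ℝ) 1)
    (Γ₁ : Set (ℝ × ℝ)) (hΓ₁ : Γ₁ = (fun x => (x, Int.fract (x + α))) '' Icc (0 : ℝ) 1)
    (hca : ∀ p ∈ Γ₀, c p = a) (hcb : ∀ p ∈ Γ₁, c p = b)
    (hcinf : ∀ p : ℝ × ℝ, p ∉ Γ₀ → p ∉ Γ₁ → c p = ⊤) :
    let μ : Measure ℝ := volume.restrict (Icc (0 : ℝ) 1)
    let π₀ : Measure (ℝ × ℝ) := μ.map (fun x => (x, x))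
    let π₁ : Measure (ℝ × ℝ) := μ.map (fun x => (x, Int.fract (x + α)))
    CMonotoneSet c Γ₀ ∧ CMonotoneSet c Γ₁ ∧
    IsCoupling μ μ π₀ ∧ IsCoupling μ μ π₁ ∧
    π₀ Γ₀ = 1 ∧ π₁ Γ₁ = 1 ∧
    (∫⁻ p, c p ∂π₀ = a) ∧ (∫⁻ p, c p ∂π₁ = b) ∧
    (b < a → ¬ ∀ π' : Measure (ℝ × ℝ), IsCoupling μ μ π' →
      ∫⁻ p, c p ∂π₀ ≤ ∫⁻ p, c p ∂π') := by
  intro μ π₀ π₁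
  subst hΓ₀ hΓ₁
  have hT : Measurable fun x : ℝ => Int.fract (x + α) := (measurable_add_const α).fract
  have h₀ : ∀ p ∈ (fun x => (x, x)) '' Icc (0 : ℝ) 1, (p.2 : UnitAddCircle) - p.1 = 0 := by
    rintro _ ⟨x, -, rfl⟩
    exact sub_self _
  have h₁ : ∀ p ∈ (fun x => (x, Int.fract (x + α))) '' Icc (0 : ℝ) 1,
      (p.2 : UnitAddCircle) - p.1 = α := by
    rintro _ ⟨x, -, rfl⟩
    rw [AddCircle.coe_fract, AddCircle.coe_add, add_sub_cancel_left]
  have hθ := hα.not_isOfFinAddOrder_coe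
  have hc : ∀ p ∉ (fun x => (x, x)) '' Icc (0 : ℝ) 1 ∪
      (fun x => (x, Int.fract (x + α))) '' Icc (0 : ℝ) 1, c p = ⊤ :=
    fun p hp => hcinf p (not_or.1 hp).1 (not_or.1 hp).2
  have hμ : μ (Icc 0 1)ᶜ = 0 := by simp [μ]
  have hμ₁ : μ (Icc 0 1) = 1 := by simp [μ]
  have hμ_univ : μ univ = 1 := by simp [μ]
  have hint₀ : ∫⁻ p, c p ∂π₀ = a := by
    rw [lintegral_map_graph_of_forall_mem_image measurable_id' measurableSet_Icc hμ hca,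
      hμ_univ, mul_one]
  have hint₁ : ∫⁻ p, c p ∂π₁ = b := by
    rw [lintegral_map_graph_of_forall_mem_image hT measurableSet_Icc hμ hcb, hμ_univ, mul_one]
  have hπ₁ := isCoupling_map_graph hT (map_fract_add_volume_Icc α)
  refine ⟨cMonotoneSet_of_shift_mem hca hc fun _ _ => shift_mem_of_forall_mem_left h₀ h₁ hθ,
    cMonotoneSet_of_shift_mem hcb hc fun _ _ => shift_mem_of_forall_mem_right h₀ h₁ hθ,
    isCoupling_map_graph measurable_id' Measure.map_id', hπ₁,
    (map_graph_apply_image measurable_id' measurableSet_Icc).trans hμ₁,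
    (map_graph_apply_image hT measurableSet_Icc).trans hμ₁, hint₀, hint₁, ?_⟩
  intro hba hopt
  exact hba.not_ge (hint₀.symm.trans_le ((hopt π₁ hπ₁).trans_eq hint₁))

theorem ambrosio_pratelli_example
    (α : ℝ) (hα : Irrational α) (hα01 : α ∈ Ico (0 : ℝ) 1)
    (a b : ℝ≥0∞) (ha : a ≠ ⊤) (hb : b ≠ ⊤)
    (c : ℝ × ℝ → ℝ≥0∞)
    (Γ₀ : Set (ℝ × ℝ)) (hΓ₀ : Γ₀ = (fun x => (x, x)) '' Icc (0 : ℝ) 1)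
    (Γ₁ : Set (ℝ × ℝ)) (hΓ₁ : Γ₁ = (fun x => (x, Int.fract (x + α))) '' Icc (0 : ℝ) 1)
    (hca : ∀ p ∈ Γ₀, c p = a) (hcb : ∀ p ∈ Γ₁, c p = b)
    (hcinf : ∀ p : ℝ × ℝ, p ∉ Γ₀ → p ∉ Γ₁ → c p = ⊤) :
    let μ : Measure ℝ := volume.restrict (Icc (0 : ℝ) 1)
    let π₀ : Measure (ℝ × ℝ) := μ.map (fun x => (x, x))
    let π₁ : Measure (ℝ × ℝ) := μ.map (fun x => (x, Int.fract (x + α)))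
    CMonotoneSet c Γ₀ ∧ CMonotoneSet c Γ₁ ∧
    IsCoupling μ μ π₀ ∧ IsCoupling μ μ π₁ ∧
    π₀ Γ₀ = 1 ∧ π₁ Γ₁ = 1 ∧
    (∫⁻ p, c p ∂π₀ = a) ∧ (∫⁻ p, c p ∂π₁ = b) ∧
    (b < a → ¬ ∀ π' : Measure (ℝ × ℝ), IsCoupling μ μ π' →
      ∫⁻ p, c p ∂π₀ ≤ ∫⁻ p, c p ∂π') :=
  ambrosio_pratelli_example_general α hα a b c Γ₀ hΓ₀ Γ₁ hΓ₁ hca hcb hcinf
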